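/- arXiv:quant-ph/0302136 — 3 statements merged into one kernel-verified Lean document; each statement's English description precedes it below -/
import Mathlib

section
/- (Risk-neutral verification inequality.) Let Γ be a controlled transfer operator, L a cost function, N a positive semidefinite Hermitian matrix, and M ≥ 1 a horizon. Suppose V assigns a real number V(ω,k) to each positive semidefinite matrix ω and each time 0 ≤ k ≤ M, and satisfies the dynamic programming equation: V(ω,M) = ⟨ω, N⟩ for all ω, and for all 0 ≤ k ≤ M−1 and all positive semidefinite ω, V(ω,k) = inf_{u∈U} { ⟨ω, L(u)⟩ + ∑_{y∈Y} V(Λ_Γ(u,y)ω, k+1) · p(y|u,ω) }. Then for every 0 ≤ k ≤ M, every normalized state ω, and every feedback controller K on the interval [k, M−1], V(ω,k) ≤ J_{ω,k}(K). -/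
/-! Backward induction on the number `m` of remaining steps, for the cost-to-go from an
arbitrary record. From a normalized state, the path probabilities below each conditioned state
sum to one, so the cost-to-go over `m + 1` steps is the running cost plus the `p`-weighted
cost-to-go from the conditioned states. The dynamic programming value is at most the same
expression at the controller's own choice `u = K rec`, and the induction hypothesis applies
to every outcome with `p ≠ 0`; outcomes with `p = 0`, where `Λ_Γ` takes its junk value `0`,
contribute nothing to either side. -/

open Matrix BigOperators
open scoped ComplexOrder

noncomputable section

/-- Complex `n × n` matrices. -/
abbrev Mat (n : ℕ) := Matrix (Fin n) (Fin n) ℂ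

/-- Real part of the trace. -/
def trR {n : ℕ} (A : Mat n) : ℝ := A.trace.re

/-- The probability `p(y|u,ω) = tr(Γ(u,y)ω)`. -/
def pDist {n : ℕ} {U Y : Type*} (Γ : U → Y → Mat n →ₗ[ℂ] Mat n)
    (u : U) (y : Y) (ω : Mat n) : ℝ := trR (Γ u y ω)

/-- The conditional state `Λ_Γ(u,y)ω = Γ(u,y)ω / p(y|u,ω)` (equal to `0` when
`p(y|u,ω) = 0`). -/
def lamState {n : ℕ} {U Y : Type*} (Γ : U → Y → Mat n →ₗ[ℂ] Mat n)
    (u : U) (y : Y) (ω : Mat n) : Mat n := (pDist Γ u y ω)⁻¹ • Γ u y ω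

/-- `∏_{i} p(y_{i+1}|u_i,ω_i)` along the measurement record `ys`, where the controller
`K` (a function of the accumulated record) chooses the controls and the state evolves
by `ω_{i+1} = Λ_Γ(u_i,y_{i+1}) ω_i`.  `rec` is the record accumulated so far. -/
def prodP {n : ℕ} {U Y : Type*} (Γ : U → Y → Mat n →ₗ[ℂ] Mat n)
    (K : List Y → U) : Mat n → List Y → List Y → ℝ
  | _, _, [] => 1
  | ω, rec, y :: ys =>
      pDist Γ (K rec) y ω * prodP Γ K (lamState Γ (K rec) y ω) (rec ++ [y]) ys

/-- `∑_i ⟨ω_i, L(u_i)⟩ + ⟨ω_M, N⟩` along the measurement record `ys`. -/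
def sumCost {n : ℕ} {U Y : Type*} (Γ : U → Y → Mat n →ₗ[ℂ] Mat n)
    (L : U → Mat n) (N : Mat n) (K : List Y → U) :
    Mat n → List Y → List Y → ℝ
  | ω, _, [] => trR (N * ω)
  | ω, rec, y :: ys =>
      trR (L (K rec) * ω) + sumCost Γ L N K (lamState Γ (K rec) y ω) (rec ++ [y]) ys

/-- The risk-neutral cost-to-go with `m` remaining steps:
`J_{ω}(K) = ∑_{y-sequences} (∏ p) · (∑ running costs + terminal cost)`. -/
def Jrn {n : ℕ} {U Y : Type*} [Fintype Y] (Γ : U → Y → Mat n →ₗ[ℂ] Mat n)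
    (L : U → Mat n) (N : Mat n) (m : ℕ) (K : List Y → U) (ω : Mat n) : ℝ :=
  ∑ ys : Fin m → Y,
    prodP Γ K ω [] (List.ofFn ys) * sumCost Γ L N K ω [] (List.ofFn ys)

theorem Fintype.sum_ofFn_succ {α M : Type*} [Fintype α] [AddCommMonoid M] (m : ℕ)
    (f : List α → M) :
    ∑ xs : Fin (m + 1) → α, f (List.ofFn xs) = ∑ a, ∑ xs : Fin m → α, f (a :: List.ofFn xs) := by
  rw [← (Fin.consEquiv fun _ => α).sum_comp, Fintype.sum_prod_type]
  simp only [Fin.consEquiv, Equiv.coe_fn_mk, List.ofFn_cons]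

lemma Matrix.PosSemidef.trR_nonneg {n : ℕ} {A : Mat n} (hA : A.PosSemidef) : 0 ≤ trR A :=
  (Complex.le_def.1 hA.trace_nonneg).1

lemma trR_smul {n : ℕ} (r : ℝ) (A : Mat n) : trR (r • A) = r * trR A := by
  simp [trR, Matrix.trace_smul]

section Conditioning

variable {n : ℕ} {U Y : Type*} (Γ : U → Y → Mat n →ₗ[ℂ] Mat n)

lemma pDist_nonneg
    (hPSD : ∀ (u : U) (y : Y) (ω : Mat n), ω.PosSemidef → (Γ u y ω).PosSemidef)
    {u : U} {y : Y} {ω : Mat n} (hω : ω.PosSemidef) : 0 ≤ pDist Γ u y ω :=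
  (hPSD u y ω hω).trR_nonneg

lemma Matrix.PosSemidef.lamState
    (hPSD : ∀ (u : U) (y : Y) (ω : Mat n), ω.PosSemidef → (Γ u y ω).PosSemidef)
    {u : U} {y : Y} {ω : Mat n} (hω : ω.PosSemidef) : (lamState Γ u y ω).PosSemidef :=
  (hPSD u y ω hω).smul (inv_nonneg.2 (pDist_nonneg Γ hPSD hω))

lemma trR_lamState {u : U} {y : Y} {ω : Mat n} (hp : pDist Γ u y ω ≠ 0) :
    trR (lamState Γ u y ω) = 1 := by
  rw [lamState, trR_smul, ← pDist, inv_mul_cancel₀ hp]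

lemma pDist_mul_eq_of_normalized
    (hPSD : ∀ (u : U) (y : Y) (ω : Mat n), ω.PosSemidef → (Γ u y ω).PosSemidef)
    {f : Mat n → ℝ} (hf : ∀ ω' : Mat n, ω'.PosSemidef → trR ω' = 1 → f ω' = 1)
    (u : U) (y : Y) {ω : Mat n} (hω : ω.PosSemidef) :
    pDist Γ u y ω * f (lamState Γ u y ω) = pDist Γ u y ω := by
  by_cases hp : pDist Γ u y ω = 0
  · simp [hp]
  · rw [hf _ (hω.lamState Γ hPSD) (trR_lamState Γ hp), mul_one]

end Conditioning

section Trajectory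

variable {n : ℕ} {U Y : Type*} [Fintype Y] (Γ : U → Y → Mat n →ₗ[ℂ] Mat n)
  (L : U → Mat n) (N : Mat n) (K : List Y → U)

lemma sum_pDist (hNorm : ∀ (u : U) (ω : Mat n), ∑ y : Y, (Γ u y ω).trace = ω.trace)
    (u : U) (ω : Mat n) : ∑ y : Y, pDist Γ u y ω = trR ω := by
  simp only [pDist, trR, ← Complex.re_sum, hNorm]

def probMass (m : ℕ) (rec : List Y) (ω : Mat n) : ℝ :=
  ∑ ys : Fin m → Y, prodP Γ K ω rec (List.ofFn ys)

def jrnFrom (m : ℕ) (rec : List Y) (ω : Mat n) : ℝ :=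
  ∑ ys : Fin m → Y, prodP Γ K ω rec (List.ofFn ys) * sumCost Γ L N K ω rec (List.ofFn ys)

lemma probMass_succ (m : ℕ) (rec : List Y) (ω : Mat n) :
    probMass Γ K (m + 1) rec ω = ∑ y, pDist Γ (K rec) y ω *
      probMass Γ K m (rec ++ [y]) (lamState Γ (K rec) y ω) := by
  simp only [probMass, Fintype.sum_ofFn_succ, prodP, Finset.mul_sum]

lemma jrnFrom_succ (m : ℕ) (rec : List Y) (ω : Mat n) :
    jrnFrom Γ L N K (m + 1) rec ω = ∑ y, pDist Γ (K rec) y ω *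
      (trR (L (K rec) * ω) * probMass Γ K m (rec ++ [y]) (lamState Γ (K rec) y ω) +
        jrnFrom Γ L N K m (rec ++ [y]) (lamState Γ (K rec) y ω)) := by
  rw [jrnFrom, Fintype.sum_ofFn_succ m fun l => prodP Γ K ω rec l * sumCost Γ L N K ω rec l]
  simp only [probMass, jrnFrom, prodP, sumCost, Finset.mul_sum, ← Finset.sum_add_distrib]
  congr! 2 with y - ys
  ring

lemma probMass_eq_one
    (hPSD : ∀ (u : U) (y : Y) (ω : Mat n), ω.PosSemidef → (Γ u y ω).PosSemidef)
    (hNorm : ∀ (u : U) (ω : Mat n), ∑ y : Y, (Γ u y ω).trace = ω.trace) (m : ℕ) :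
    ∀ (rec : List Y) (ω : Mat n), ω.PosSemidef → trR ω = 1 → probMass Γ K m rec ω = 1 := by
  induction m with
  | zero => intro rec ω _ _; simp [probMass, prodP]
  | succ m ih =>
    intro rec ω hω htr
    have hmass y := pDist_mul_eq_of_normalized Γ hPSD (ih (rec ++ [y])) (K rec) y hω
    rw [probMass_succ, Finset.sum_congr rfl fun y _ => hmass y, sum_pDist Γ hNorm, htr]

lemma jrnFrom_succ_of_normalized
    (hPSD : ∀ (u : U) (y : Y) (ω : Mat n), ω.PosSemidef → (Γ u y ω).PosSemidef)
    (hNorm : ∀ (u : U) (ω : Mat n), ∑ y : Y, (Γ u y ω).trace = ω.trace)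
    (m : ℕ) (rec : List Y) {ω : Mat n} (hω : ω.PosSemidef) (htr : trR ω = 1) :
    jrnFrom Γ L N K (m + 1) rec ω = trR (L (K rec) * ω) + ∑ y, pDist Γ (K rec) y ω *
      jrnFrom Γ L N K m (rec ++ [y]) (lamState Γ (K rec) y ω) := by
  have hmass y := pDist_mul_eq_of_normalized Γ hPSD
    (probMass_eq_one Γ K hPSD hNorm m (rec ++ [y])) (K rec) y hω
  calc jrnFrom Γ L N K (m + 1) rec ω
      = ∑ y, (pDist Γ (K rec) y ω * probMass Γ K m (rec ++ [y]) (lamState Γ (K rec) y ω) *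
          trR (L (K rec) * ω) +
          pDist Γ (K rec) y ω * jrnFrom Γ L N K m (rec ++ [y]) (lamState Γ (K rec) y ω)) := by
        rw [jrnFrom_succ]
        congr! 1 with y
        ring
    _ = _ := by
        simp only [hmass, Finset.sum_add_distrib, ← Finset.sum_mul, sum_pDist Γ hNorm, htr,
          one_mul]

theorem le_jrnFrom_of_dynamicProgramming [Fintype U]
    (hPSD : ∀ (u : U) (y : Y) (ω : Mat n), ω.PosSemidef → (Γ u y ω).PosSemidef)
    (hNorm : ∀ (u : U) (ω : Mat n), ∑ y : Y, (Γ u y ω).trace = ω.trace)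
    {M : ℕ} {V : Mat n → ℕ → ℝ} (hVM : ∀ ω : Mat n, V ω M = trR (N * ω))
    (hVk : ∀ k < M, ∀ ω : Mat n, ω.PosSemidef →
      V ω k = ⨅ u : U,
        (trR (L u * ω) + ∑ y : Y, V (lamState Γ u y ω) (k + 1) * pDist Γ u y ω))
    {m : ℕ} (hm : m ≤ M) (rec : List Y) {ω : Mat n} (hω : ω.PosSemidef) (htr : trR ω = 1) :
    V ω (M - m) ≤ jrnFrom Γ L N K m rec ω := by
  induction m generalizing rec ω with
  | zero => simp [jrnFrom, prodP, sumCost, hVM]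
  | succ m ih =>
    set u := K rec
    have hstep : M - (m + 1) + 1 = M - m := by omega
    have hnext : ∀ y, V (lamState Γ u y ω) (M - m) * pDist Γ u y ω ≤
        pDist Γ u y ω * jrnFrom Γ L N K m (rec ++ [y]) (lamState Γ u y ω) := by
      intro y
      by_cases hp : pDist Γ u y ω = 0
      · simp [hp]
      · rw [mul_comm]
        exact mul_le_mul_of_nonneg_left
          (ih (by omega) _ (hω.lamState Γ hPSD) (trR_lamState Γ hp)) (pDist_nonneg Γ hPSD hω)
    calc V ω (M - (m + 1))
        ≤ trR (L u * ω) + ∑ y, V (lamState Γ u y ω) (M - m) * pDist Γ u y ω := by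
          rw [hVk _ (by omega) ω hω, ← hstep]
          exact ciInf_le (Set.finite_range _).bddBelow u
      _ ≤ trR (L u * ω) + ∑ y, pDist Γ u y ω *
            jrnFrom Γ L N K m (rec ++ [y]) (lamState Γ u y ω) :=
          add_le_add_right (Finset.sum_le_sum fun y _ => hnext y) _
      _ = jrnFrom Γ L N K (m + 1) rec ω :=
          (jrnFrom_succ_of_normalized Γ L N K hPSD hNorm m rec hω htr).symm

end Trajectory

theorem riskNeutral_verification_general
    {n : ℕ} {U Y : Type*} [Fintype U] [Fintype Y]
    (Γ : U → Y → Mat n →ₗ[ℂ] Mat n)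
    (hPSD : ∀ (u : U) (y : Y) (ω : Mat n), ω.PosSemidef → (Γ u y ω).PosSemidef)
    (hNorm : ∀ (u : U) (ω : Mat n), ∑ y : Y, (Γ u y ω).trace = ω.trace)
    (L : U → Mat n)
    (N : Mat n)
    (M : ℕ)
    (V : Mat n → ℕ → ℝ)
    (hVM : ∀ ω : Mat n, V ω M = trR (N * ω))
    (hVk : ∀ k < M, ∀ ω : Mat n, ω.PosSemidef →
      V ω k = ⨅ u : U,
        (trR (L u * ω) + ∑ y : Y, V (lamState Γ u y ω) (k + 1) * pDist Γ u y ω)) :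
    ∀ k ≤ M, ∀ ω : Mat n, ω.PosSemidef → ω.trace = 1 →
      ∀ K : List Y → U, V ω k ≤ Jrn Γ L N (M - k) K ω := by
  intro k hk ω hω htr K
  have htrR : trR ω = 1 := by simp [trR, htr]
  have h := le_jrnFrom_of_dynamicProgramming Γ L N K hPSD hNorm hVM hVk (Nat.sub_le M k) [] hω htrR
  rwa [Nat.sub_sub_self hk] at h

/-- risk-neutral verification inequality.  If `V` satisfies the
risk-neutral dynamic programming equation, then `V(ω,k) ≤ J_{ω,k}(K)` for every
normalized state `ω` and every feedback controller `K` on `[k, M−1]`. -/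
theorem riskNeutral_verification
    {n : ℕ} {U Y : Type*} [Fintype U] [Nonempty U] [Fintype Y] [Nonempty Y]
    (Γ : U → Y → Mat n →ₗ[ℂ] Mat n)
    (hPSD : ∀ (u : U) (y : Y) (ω : Mat n), ω.PosSemidef → (Γ u y ω).PosSemidef)
    (hNorm : ∀ (u : U) (ω : Mat n), ∑ y : Y, (Γ u y ω).trace = ω.trace)
    (L : U → Mat n) (hL : ∀ u, (L u).PosSemidef)
    (N : Mat n) (hN : N.PosSemidef)
    (M : ℕ) (hM : 1 ≤ M)
    (V : Mat n → ℕ → ℝ)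
    (hVM : ∀ ω : Mat n, V ω M = trR (N * ω))
    (hVk : ∀ k < M, ∀ ω : Mat n, ω.PosSemidef →
      V ω k = ⨅ u : U,
        (trR (L u * ω) + ∑ y : Y, V (lamState Γ u y ω) (k + 1) * pDist Γ u y ω)) :
    ∀ k ≤ M, ∀ ω : Mat n, ω.PosSemidef → ω.trace = 1 →
      ∀ K : List Y → U, V ω k ≤ Jrn Γ L N (M - k) K ω :=
  riskNeutral_verification_general Γ hPSD hNorm L N M V hVM hVk
end
end

section
/- (Theorem 1(i): risk-sensitive verification inequality.) Let Γ be a controlled transfer operator, R an operator valued cost, F a Hermitian matrix, and M ≥ 1. Suppose W assigns a real number W(ω̂,k) to each positive semidefinite matrix ω̂ and each time 0 ≤ k ≤ M, and satisfies the dynamic programming equation: W(ω̂,M) = ⟨ω̂, F⟩ for all ω̂, and for all 0 ≤ k ≤ M−1 and all positive semidefinite ω̂, W(ω̂,k) = inf_{u∈U} { ∑_{y∈Y} W(Λ_{Γ,R}(u,y)ω̂, k+1) · p_R(y|u,ω̂) }. Then for every 0 ≤ k ≤ M, every positive semidefinite ω̂, and every feedback controller K on [k, M−1], W(ω̂,k)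 ≤ J^μ_{ω̂,k}(K). -/
open Matrix BigOperators
open scoped ComplexOrder

noncomputable section

/-- `p_R(y|u,ωh) = tr(Γ(u,y)(R(u)ωh)) / tr(R(u)ωh)` (equal to `0` when the
denominator vanishes, by the junk-value convention of real division). -/
def pR {n : ℕ} {U Y : Type*} (Γ : U → Y → Mat n →ₗ[ℂ] Mat n)
    (R : U → Mat n → Mat n) (u : U) (y : Y) (ωh : Mat n) : ℝ :=
  trR (Γ u y (R u ωh)) / trR (R u ωh)

/-- The unnormalized conditional state
`Λ_{Γ,R}(u,y)ωh = Γ_R(u,y)ωh / p_R(y|u,ωh)` (equal to `0` when `p_R(y|u,ωh) = 0`). -/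
def lamR {n : ℕ} {U Y : Type*} (Γ : U → Y → Mat n →ₗ[ℂ] Mat n)
    (R : U → Mat n → Mat n) (u : U) (y : Y) (ωh : Mat n) : Mat n :=
  (pR Γ R u y ωh)⁻¹ • Γ u y (R u ωh)

/-- The cost functional `G`: `G(ωh) = tr(F ωh)` when no outcomes remain, and otherwise
`G_j(ωh) = G_{j+1}(Γ(u_j,y_{j+1}) R(u_j) ωh)`, with controls `u_j = K(record so far)`. -/
def Gcost {n : ℕ} {U Y : Type*} (Γ : U → Y → Mat n →ₗ[ℂ] Mat n)
    (R : U → Mat n → Mat n) (F : Mat n) (K : List Y → U) :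
    List Y → Mat n → List Y → ℝ
  | _, ωh, [] => trR (F * ωh)
  | rec, ωh, y :: ys =>
      Gcost Γ R F K (rec ++ [y]) (Γ (K rec) y (R (K rec) ωh)) ys

/-- `∏_k p_R(y_{k+1}|u_k, ωh_k)` along the record `ys`, with the unnormalized
conditional dynamics `ωh_{k+1} = Λ_{Γ,R}(u_k,y_{k+1}) ωh_k`. -/
def prodPR {n : ℕ} {U Y : Type*} (Γ : U → Y → Mat n →ₗ[ℂ] Mat n)
    (R : U → Mat n → Mat n) (K : List Y → U) : Mat n → List Y → List Y → ℝ
  | _, _, [] => 1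
  | ωh, rec, y :: ys =>
      pR Γ R (K rec) y ωh * prodPR Γ R K (lamR Γ R (K rec) y ωh) (rec ++ [y]) ys

/-- The terminal state of the unnormalized conditional dynamics
`ωh_{k+1} = Λ_{Γ,R}(u_k,y_{k+1}) ωh_k` along the record `ys`. -/
def trajR {n : ℕ} {U Y : Type*} (Γ : U → Y → Mat n →ₗ[ℂ] Mat n)
    (R : U → Mat n → Mat n) (K : List Y → U) : Mat n → List Y → List Y → Mat n
  | ωh, _, [] => ωh
  | ωh, rec, y :: ys => trajR Γ R K (lamR Γ R (K rec) y ωh) (rec ++ [y]) ys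

/-!
Backward induction on the number of remaining steps. Since `R(u)` is homogeneous, so is every
cost functional `G_j`, hence `p_R(y|u,ω̂) · G_{j+1}(Λ_{Γ,R}(u,y)ω̂) = G_{j+1}(Γ_R(u,y)ω̂)`; on a
branch with `p_R = 0` both sides vanish because `Γ_R(u,y)ω̂` is a positive semidefinite matrix of
trace zero. Bounding the infimum in the dynamic programming equation by the control that `K`
chooses and applying the induction hypothesis to each `Λ_{Γ,R}(u,y)ω̂` then gives the claim.
-/

namespace Matrix.PosSemidef

variable {n : ℕ} {A : Mat n}

lemma trR_nonneg_s5 (hA : A.PosSemidef) : 0 ≤ trR A :=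
  (Complex.nonneg_iff.mp hA.trace_nonneg).1

lemma eq_zero_of_trR_eq_zero (hA : A.PosSemidef) (h : trR A = 0) : A = 0 :=
  hA.trace_eq_zero_iff.mp <| Complex.ext h (Complex.nonneg_iff.mp hA.trace_nonneg).2.symm

end Matrix.PosSemidef

lemma Fintype.sum_fin_succ_pi_ofFn {Y β : Type*} [Fintype Y] [AddCommMonoid β] (m : ℕ)
    (f : List Y → β) :
    ∑ ys : Fin (m + 1) → Y, f (List.ofFn ys) =
      ∑ y : Y, ∑ ys : Fin m → Y, f (y :: List.ofFn ys) := by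
  rw [← (Fin.consEquiv fun _ : Fin (m + 1) => Y).sum_comp, Fintype.sum_prod_type]
  simp [Fin.consEquiv, List.ofFn_succ]

section

variable {n : ℕ} {U Y : Type*} {Γ : U → Y → Mat n →ₗ[ℂ] Mat n} {R : U → Mat n → Mat n}
  {u : U} {y : Y} {ωh : Mat n}

lemma pR_nonneg (hR : (R u ωh).PosSemidef) (hΓR : (Γ u y (R u ωh)).PosSemidef) :
    0 ≤ pR Γ R u y ωh :=
  div_nonneg hΓR.trR_nonneg_s5 hR.trR_nonneg_s5

lemma lamR_posSemidef (hR : (R u ωh).PosSemidef) (hΓR : (Γ u y (R u ωh)).PosSemidef) :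
    (lamR Γ R u y ωh).PosSemidef :=
  hΓR.smul (inv_nonneg.mpr (pR_nonneg hR hΓR))

lemma apply_eq_zero_of_pR_eq_zero (hR : (R u ωh).PosSemidef)
    (hΓR : (Γ u y (R u ωh)).PosSemidef) (hp : pR Γ R u y ωh = 0) : Γ u y (R u ωh) = 0 := by
  rcases div_eq_zero_iff.mp hp with hnum | hden
  · exact hΓR.eq_zero_of_trR_eq_zero hnum
  · rw [hR.eq_zero_of_trR_eq_zero hden, map_zero]

lemma Gcost_smul (hRhom : ∀ (u : U) (r : ℝ) (ωh : Mat n), R u (r • ωh) = r • R u ωh)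
    (F : Mat n) (K : List Y → U) (ys rec : List Y) (r : ℝ) (ωh : Mat n) :
    Gcost Γ R F K rec (r • ωh) ys = r * Gcost Γ R F K rec ωh ys := by
  induction ys generalizing rec ωh with
  | nil => simp [Gcost, trR]
  | cons y ys ih => simp only [Gcost, hRhom, LinearMap.map_smul_of_tower, ih]

lemma pR_mul_Gcost_lamR (hR : (R u ωh).PosSemidef) (hΓR : (Γ u y (R u ωh)).PosSemidef)
    (hRhom : ∀ (u : U) (r : ℝ) (ωh : Mat n), R u (r • ωh) = r • R u ωh)
    (F : Mat n) (K : List Y → U) (ys rec : List Y) :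
    pR Γ R u y ωh * Gcost Γ R F K rec (lamR Γ R u y ωh) ys =
      Gcost Γ R F K rec (Γ u y (R u ωh)) ys := by
  by_cases hp : pR Γ R u y ωh = 0
  · rw [hp, zero_mul, apply_eq_zero_of_pR_eq_zero hR hΓR hp, ← zero_smul ℝ (0 : Mat n),
      Gcost_smul hRhom, zero_mul]
  · rw [lamR, Gcost_smul hRhom, ← mul_assoc, mul_inv_cancel₀ hp, one_mul]

end

lemma le_sum_Gcost_of_dynamicProgramming {n : ℕ} {U Y : Type*} [Fintype U] [Fintype Y]
    {Γ : U → Y → Mat n →ₗ[ℂ] Mat n}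
    (hPSD : ∀ (u : U) (y : Y) (ω : Mat n), ω.PosSemidef → (Γ u y ω).PosSemidef)
    {R : U → Mat n → Mat n}
    (hRPSD : ∀ (u : U) (ωh : Mat n), ωh.PosSemidef → (R u ωh).PosSemidef)
    (hRhom : ∀ (u : U) (r : ℝ) (ωh : Mat n), R u (r • ωh) = r • R u ωh)
    (F : Mat n) {M : ℕ} {W : Mat n → ℕ → ℝ}
    (hWM : ∀ ωh : Mat n, W ωh M = trR (F * ωh))
    (hWk : ∀ k < M, ∀ ωh : Mat n, ωh.PosSemidef →
      W ωh k = ⨅ u : U, ∑ y : Y, W (lamR Γ R u y ωh) (k + 1) * pR Γ R u y ωh)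
    (m : ℕ) {k : ℕ} (hkm : k + m = M) {ωh : Mat n} (hωh : ωh.PosSemidef)
    (K : List Y → U) (rec : List Y) :
    W ωh k ≤ ∑ ys : Fin m → Y, Gcost Γ R F K rec ωh (List.ofFn ys) := by
  induction m generalizing k ωh rec with
  | zero =>
    obtain rfl : k = M := hkm
    simp [hWM, Gcost]
  | succ m ih =>
    have hR := hRPSD (K rec) ωh hωh
    have hΓR y := hPSD (K rec) y _ hR
    calc W ωh k
        = ⨅ u : U, ∑ y : Y, W (lamR Γ R u y ωh) (k + 1) * pR Γ R u y ωh :=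
          hWk k (by omega) ωh hωh
      _ ≤ ∑ y : Y, W (lamR Γ R (K rec) y ωh) (k + 1) * pR Γ R (K rec) y ωh :=
          ciInf_le (Set.finite_range _).bddBelow (K rec)
      _ ≤ ∑ y : Y, pR Γ R (K rec) y ωh *
            ∑ ys : Fin m → Y, Gcost Γ R F K (rec ++ [y]) (lamR Γ R (K rec) y ωh) (List.ofFn ys) := by
          refine Finset.sum_le_sum fun y _ => ?_
          rw [mul_comm]
          exact mul_le_mul_of_nonneg_left
            (ih (by omega) (lamR_posSemidef hR (hΓR y)) (rec ++ [y])) (pR_nonneg hR (hΓR y))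
      _ = ∑ y : Y, ∑ ys : Fin m → Y,
            Gcost Γ R F K (rec ++ [y]) (Γ (K rec) y (R (K rec) ωh)) (List.ofFn ys) := by
          simp only [Finset.mul_sum, pR_mul_Gcost_lamR hR (hΓR _) hRhom]
      _ = ∑ ys : Fin (m + 1) → Y, Gcost Γ R F K rec ωh (List.ofFn ys) := by
          simp only [Fintype.sum_fin_succ_pi_ofFn, Gcost]

theorem riskSensitive_verification_general
    {n : ℕ} {U Y : Type*} [Fintype U] [Fintype Y]
    (Γ : U → Y → Mat n →ₗ[ℂ] Mat n)
    (hPSD : ∀ (u : U) (y : Y) (ω : Mat n), ω.PosSemidef → (Γ u y ω).PosSemidef)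
    (R : U → Mat n → Mat n)
    (hRPSD : ∀ (u : U) (ωh : Mat n), ωh.PosSemidef → (R u ωh).PosSemidef)
    (hRhom : ∀ (u : U) (r : ℝ) (ωh : Mat n), R u (r • ωh) = r • R u ωh)
    (F : Mat n)
    (M : ℕ)
    (W : Mat n → ℕ → ℝ)
    (hWM : ∀ ωh : Mat n, W ωh M = trR (F * ωh))
    (hWk : ∀ k < M, ∀ ωh : Mat n, ωh.PosSemidef →
      W ωh k = ⨅ u : U, ∑ y : Y, W (lamR Γ R u y ωh) (k + 1) * pR Γ R u y ωh) :
    ∀ k ≤ M, ∀ ωh : Mat n, ωh.PosSemidef →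
      ∀ K : List Y → U,
        W ωh k ≤ ∑ ys : Fin (M - k) → Y, Gcost Γ R F K [] ωh (List.ofFn ys) :=
  fun k hk _ hωh K =>
    le_sum_Gcost_of_dynamicProgramming hPSD hRPSD hRhom F hWM hWk (M - k) (by omega) hωh K []

/-- Theorem 1(i): risk-sensitive verification inequality.  If `W`
satisfies the risk-sensitive dynamic programming equation, then
`W(ωh,k) ≤ J^μ_{ωh,k}(K)` for every positive semidefinite `ωh` and every feedback
controller `K` on `[k, M−1]`. -/
theorem riskSensitive_verification
    {n : ℕ} {U Y : Type*} [Fintype U] [Nonempty U] [Fintype Y] [Nonempty Y]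
    (Γ : U → Y → Mat n →ₗ[ℂ] Mat n)
    (hPSD : ∀ (u : U) (y : Y) (ω : Mat n), ω.PosSemidef → (Γ u y ω).PosSemidef)
    (hNorm : ∀ (u : U) (ω : Mat n), ∑ y : Y, (Γ u y ω).trace = ω.trace)
    (R : U → Mat n → Mat n)
    (hRPSD : ∀ (u : U) (ωh : Mat n), ωh.PosSemidef → (R u ωh).PosSemidef)
    (hRhom : ∀ (u : U) (r : ℝ) (ωh : Mat n), R u (r • ωh) = r • R u ωh)
    (F : Mat n) (hF : F.IsHermitian)
    (M : ℕ) (hM : 1 ≤ M)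
    (W : Mat n → ℕ → ℝ)
    (hWM : ∀ ωh : Mat n, W ωh M = trR (F * ωh))
    (hWk : ∀ k < M, ∀ ωh : Mat n, ωh.PosSemidef →
      W ωh k = ⨅ u : U, ∑ y : Y, W (lamR Γ R u y ωh) (k + 1) * pR Γ R u y ωh) :
    ∀ k ≤ M, ∀ ωh : Mat n, ωh.PosSemidef →
      ∀ K : List Y → U,
        W ωh k ≤ ∑ ys : Fin (M - k) → Y, Gcost Γ R F K [] ωh (List.ofFn ys) :=
  riskSensitive_verification_general Γ hPSD R hRPSD hRhom F M W hWM hWk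
end
end

section
/- (Robustness bound for the risk-sensitive criterion.) Let Ω be a finite nonempty set, and let P, Q : Ω → ℝ be probability mass functions (nonnegative, summing to 1) such that Q(x) > 0 implies P(x) > 0. Define the relative entropy RE(Q‖P) = ∑_{x : Q(x)>0} Q(x) log(Q(x)/P(x)). Let μ > 0 and γ² = 1/μ. Let M ≥ 1, let L(u) (u ∈ U) and N be positive semidefinite Hermitian n×n matrices, and let u_k : Ω → U (0 ≤ k ≤ M−1) and ω_k : Ω → {density matrices} (0 ≤ k ≤ M) be arbitrary functions. Then ∑_{x∈Ω} Q(x) · (∑_{k=0}^{M−1} tr(L(u_k(x)) ω_k(x)) + tr(N ω_M(x))) ≤ γ² · log( ∑_{x∈Ω} P(x) · ∏_{k=0}^{M−1} tr(exp(μ L(u_k(x))) ω_k(x)) · tr(exp(μ N) ω_M(x)) ) + γ² · RE(Q‖P). -/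
open Matrix BigOperators
open scoped ComplexOrder

noncomputable section

/-- The matrix exponential. -/
def expM {n : ℕ} (A : Mat n) : Mat n := NormedSpace.exp A

/-- Relative entropy `RE(Q‖P) = ∑_{x : Q(x) > 0} Q(x) log(Q(x)/P(x))` of probability
mass functions on a finite type. -/
def relEnt {Ω : Type*} [Fintype Ω] (Q P : Ω → ℝ) : ℝ :=
  ∑ x ∈ Finset.univ.filter (fun x => 0 < Q x), Q x * Real.log (Q x / P x)

/-! Peierls' inequality — Jensen's inequality for `exp` in an eigenbasis of the cost matrix, with
the diagonal of the density matrix in that basis as weights — bounds `exp (μ · cost)` by the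
risk-sensitive cost state by state. The Gibbs variational inequality
`∑ Q f - RE(Q‖P) ≤ log ∑ P e^f`, which is Jensen's inequality for `log` with weights `Q` on the
support of `Q`, applied to `f = log` of the risk-sensitive cost, then gives the bound after
division by `μ`. -/

namespace Matrix.IsHermitian

variable {n 𝕜 : Type*} [Fintype n] [DecidableEq n] [RCLike 𝕜] {A : Matrix n n 𝕜}

lemma exp_eq_cfc (hA : A.IsHermitian) : NormedSpace.exp A = hA.cfc Real.exp := by
  have hconj := exp_units_conj (Unitary.toUnits hA.eigenvectorUnitary)
    (diagonal (RCLike.ofReal ∘ hA.eigenvalues))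
  simp only [Unitary.val_toUnits_apply, Unitary.val_inv_toUnits_apply, UnitaryGroup.inv_val]
    at hconj
  have hexp (r : ℝ) : NormedSpace.exp (r : 𝕜) = (Real.exp r : 𝕜) := by
    rw [Real.exp_eq_exp_ℝ, ← RCLike.algebraMap_eq_ofReal,
      NormedSpace.map_exp _ (continuous_algebraMap ℝ 𝕜)]
  conv_lhs => rw [hA.spectral_theorem, Unitary.conjStarAlgAut_apply]
  rw [hconj, exp_diagonal, IsHermitian.cfc, Unitary.conjStarAlgAut_apply]
  simp only [Pi.exp_def, Function.comp_def, hexp]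

lemma trace_cfc_mul (hA : A.IsHermitian) (f : ℝ → ℝ) (ω : Matrix n n 𝕜) :
    (hA.cfc f * ω).trace = ∑ i, (f (hA.eigenvalues i) : 𝕜) *
      (star (hA.eigenvectorUnitary : Matrix n n 𝕜) * ω * hA.eigenvectorUnitary) i i := by
  rw [IsHermitian.cfc, Unitary.conjStarAlgAut_apply, mul_assoc, trace_mul_comm, ← mul_assoc]
  simp [trace, mul_diagonal, mul_comm]

end Matrix.IsHermitian

theorem ConvexOn.map_re_trace_mul_le_re_trace_cfc_mul {n 𝕜 : Type*} [Fintype n] [DecidableEq n]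
    [RCLike 𝕜] {f : ℝ → ℝ} (hf : ConvexOn ℝ Set.univ f) {A ω : Matrix n n 𝕜}
    (hA : A.IsHermitian) (hω : ω.PosSemidef) (htr : ω.trace = 1) :
    f (RCLike.re (A * ω).trace) ≤ RCLike.re (hA.cfc f * ω).trace := by
  set U : Matrix n n 𝕜 := ↑hA.eigenvectorUnitary
  set S := star U * ω * U
  have hS : S.PosSemidef := hω.conjTranspose_mul_mul_same U
  have hS_diag (i : n) : 0 ≤ RCLike.re (S i i) := (RCLike.nonneg_iff.mp hS.diag_nonneg).1
  have hS_trace : ∑ i, RCLike.re (S i i) = 1 := by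
    have : S.trace = 1 := by rw [trace_mul_cycle]; simp [U, htr]
    simpa [trace] using congr_arg RCLike.re this
  have hre (g : ℝ → ℝ) :
      RCLike.re (hA.cfc g * ω).trace = ∑ i, RCLike.re (S i i) • g (hA.eigenvalues i) := by
    simp [IsHermitian.trace_cfc_mul, map_sum, mul_comm, S, U]
  have hid : hA.cfc id = A := hA.spectral_theorem.symm
  conv_lhs => rw [← hid]
  rw [hre, hre]
  exact hf.map_sum_le (fun i _ => hS_diag i) hS_trace fun i _ => Set.mem_univ _

theorem exp_mul_trR_mul_le_trR_expM_smul_mul {n : ℕ} (μ : ℝ) {A ω : Mat n}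
    (hA : A.IsHermitian) (hω : ω.PosSemidef) (htr : ω.trace = 1) :
    Real.exp (μ * trR (A * ω)) ≤ trR (expM (μ • A) * ω) := by
  have hμA : (μ • A).IsHermitian := (IsSelfAdjoint.all μ).smul hA
  have := convexOn_exp.map_re_trace_mul_le_re_trace_cfc_mul hμA hω htr
  rwa [← hμA.exp_eq_cfc, smul_mul_assoc, trace_smul, RCLike.smul_re] at this

theorem exp_mul_sum_trR_mul_add_le_prod_trR_expM_mul {n M : ℕ} (μ : ℝ) {A : ℕ → Mat n}
    {B : Mat n} {ρ : ℕ → Mat n} (hA : ∀ k, (A k).IsHermitian) (hB : B.IsHermitian)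
    (hρ : ∀ k ≤ M, (ρ k).PosSemidef ∧ (ρ k).trace = 1) :
    Real.exp (μ * ((∑ k ∈ Finset.range M, trR (A k * ρ k)) + trR (B * ρ M)))
      ≤ (∏ k ∈ Finset.range M, trR (expM (μ • A k) * ρ k)) * trR (expM (μ • B) * ρ M) := by
  have hstep : ∀ k ∈ Finset.range M,
      Real.exp (μ * trR (A k * ρ k)) ≤ trR (expM (μ • A k) * ρ k) := fun k hk =>
    have hkM := (Finset.mem_range.mp hk).le
    exp_mul_trR_mul_le_trR_expM_smul_mul μ (hA k) (hρ k hkM).1 (hρ k hkM).2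
  have hterm := exp_mul_trR_mul_le_trR_expM_smul_mul μ hB (hρ M le_rfl).1 (hρ M le_rfl).2
  rw [mul_add, Real.exp_add, Finset.mul_sum, Real.exp_sum]
  exact mul_le_mul (Finset.prod_le_prod (fun _ _ => (Real.exp_pos _).le) hstep) hterm
    (Real.exp_pos _).le (Finset.prod_nonneg fun k hk => (Real.exp_pos _).le.trans (hstep k hk))

theorem sum_mul_sub_relEnt_le_log_sum_mul_exp {Ω : Type*} [Fintype Ω] {P Q : Ω → ℝ}
    (hP0 : ∀ x, 0 ≤ P x) (hQ0 : ∀ x, 0 ≤ Q x) (hQ1 : ∑ x, Q x = 1)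
    (hac : ∀ x, 0 < Q x → 0 < P x) (f : Ω → ℝ) :
    ∑ x, Q x * f x - relEnt Q P ≤ Real.log (∑ x, P x * Real.exp (f x)) := by
  set T := Finset.univ.filter fun x => 0 < Q x
  have hQT : ∀ x ∈ T, 0 < Q x := fun x hx => (Finset.mem_filter.mp hx).2
  have hsum_T (g : Ω → ℝ) : ∑ x ∈ T, Q x * g x = ∑ x, Q x * g x :=
    Finset.sum_filter_of_ne fun x _ hx => (hQ0 x).lt_of_ne' (left_ne_zero_of_mul hx)
  have hT_one : ∑ x ∈ T, Q x = 1 := by simpa [hQ1] using hsum_T fun _ => 1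
  set t := fun x => P x * Real.exp (f x) / Q x
  have ht_pos : ∀ x ∈ T, 0 < t x := fun x hx =>
    div_pos (mul_pos (hac x (hQT x hx)) (Real.exp_pos _)) (hQT x hx)
  have hQt : ∑ x ∈ T, Q x * t x = ∑ x ∈ T, P x * Real.exp (f x) :=
    Finset.sum_congr rfl fun x hx => mul_div_cancel₀ _ (hQT x hx).ne'
  calc ∑ x, Q x * f x - relEnt Q P = ∑ x ∈ T, Q x * Real.log (t x) := by
        rw [← hsum_T, relEnt, ← Finset.sum_sub_distrib]
        refine Finset.sum_congr rfl fun x hx => ?_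
        have hQx := hQT x hx
        have hPx := hac x hQx
        rw [Real.log_div (by positivity) hQx.ne', Real.log_mul hPx.ne' (Real.exp_pos _).ne',
          Real.log_exp, Real.log_div hQx.ne' hPx.ne']
        ring
    _ ≤ Real.log (∑ x ∈ T, Q x * t x) := by
        simpa using strictConcaveOn_log_Ioi.concaveOn.le_map_sum (fun x _ => hQ0 x) hT_one ht_pos
    _ ≤ Real.log (∑ x, P x * Real.exp (f x)) := by
        rw [hQt]
        refine Real.log_le_log (Finset.sum_pos (fun x hx => ?_) ?_) ?_
        · exact mul_pos (hac x (hQT x hx)) (Real.exp_pos _)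
        · exact Finset.nonempty_of_sum_ne_zero (hT_one ▸ one_ne_zero)
        · exact Finset.sum_le_sum_of_subset_of_nonneg (Finset.subset_univ T)
            fun x _ _ => by have := hP0 x; positivity

theorem risk_sensitive_robustness_bound_general
    {n : ℕ} {Ω : Type*} [Fintype Ω]
    {U : Type*}
    (P Q : Ω → ℝ)
    (hP0 : ∀ x, 0 ≤ P x)
    (hQ0 : ∀ x, 0 ≤ Q x) (hQ1 : ∑ x : Ω, Q x = 1)
    (hac : ∀ x, 0 < Q x → 0 < P x)
    (μ : ℝ) (hμ : 0 < μ)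
    (M : ℕ)
    (L : U → Mat n) (hL : ∀ u, (L u).PosSemidef)
    (N : Mat n) (hN : N.PosSemidef)
    (u : ℕ → Ω → U) (ω : ℕ → Ω → Mat n)
    (hω : ∀ k ≤ M, ∀ x, (ω k x).PosSemidef ∧ (ω k x).trace = 1) :
    ∑ x : Ω, Q x *
        ((∑ k ∈ Finset.range M, trR (L (u k x) * ω k x)) + trR (N * ω M x))
      ≤ μ⁻¹ * Real.log (∑ x : Ω, P x *
            ((∏ k ∈ Finset.range M, trR (expM (μ • L (u k x)) * ω k x))
              * trR (expM (μ • N) * ω M x)))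
        + μ⁻¹ * relEnt Q P := by
  set cost := fun x => (∑ k ∈ Finset.range M, trR (L (u k x) * ω k x)) + trR (N * ω M x)
  set g := fun x => (∏ k ∈ Finset.range M, trR (expM (μ • L (u k x)) * ω k x))
    * trR (expM (μ • N) * ω M x)
  have hg (x : Ω) : Real.exp (μ * cost x) ≤ g x :=
    exp_mul_sum_trR_mul_add_le_prod_trR_expM_mul μ (fun k => (hL (u k x)).isHermitian)
      hN.isHermitian fun k hk => hω k hk x
  have hg_pos (x : Ω) : 0 < g x := (Real.exp_pos _).trans_le (hg x)
  have hgibbs := sum_mul_sub_relEnt_le_log_sum_mul_exp hP0 hQ0 hQ1 hac fun x => Real.log (g x)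
  simp only [Real.exp_log (hg_pos _)] at hgibbs
  calc ∑ x, Q x * cost x = μ⁻¹ * ∑ x, Q x * (μ * cost x) := by
        rw [Finset.mul_sum]
        exact Finset.sum_congr rfl fun x _ => by field_simp
    _ ≤ μ⁻¹ * ∑ x, Q x * Real.log (g x) := by
        gcongr with x
        · exact hQ0 x
        · exact (Real.le_log_iff_exp_le (hg_pos x)).2 (hg x)
    _ ≤ μ⁻¹ * (Real.log (∑ x, P x * g x) + relEnt Q P) := by gcongr; linarith
    _ = _ := mul_add _ _ _

/-- robustness bound for the risk-sensitive criterion: the `Q`-average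
risk-neutral cost is bounded by `γ² log` of the `P`-average risk-sensitive cost plus
`γ² RE(Q‖P)`, where `γ² = 1/μ`. -/
theorem risk_sensitive_robustness_bound
    {n : ℕ} {Ω : Type*} [Fintype Ω] [Nonempty Ω]
    {U : Type*} [Fintype U] [Nonempty U]
    (P Q : Ω → ℝ)
    (hP0 : ∀ x, 0 ≤ P x) (hP1 : ∑ x : Ω, P x = 1)
    (hQ0 : ∀ x, 0 ≤ Q x) (hQ1 : ∑ x : Ω, Q x = 1)
    (hac : ∀ x, 0 < Q x → 0 < P x)
    (μ : ℝ) (hμ : 0 < μ)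
    (M : ℕ) (hM : 1 ≤ M)
    (L : U → Mat n) (hL : ∀ u, (L u).PosSemidef)
    (N : Mat n) (hN : N.PosSemidef)
    (u : ℕ → Ω → U) (ω : ℕ → Ω → Mat n)
    (hω : ∀ k ≤ M, ∀ x, (ω k x).PosSemidef ∧ (ω k x).trace = 1) :
    ∑ x : Ω, Q x *
        ((∑ k ∈ Finset.range M, trR (L (u k x) * ω k x)) + trR (N * ω M x))
      ≤ μ⁻¹ * Real.log (∑ x : Ω, P x *
            ((∏ k ∈ Finset.range M, trR (expM (μ • L (u k x)) * ω k x))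
              * trR (expM (μ • N) * ω M x)))
        + μ⁻¹ * relEnt Q P :=
  risk_sensitive_robustness_bound_general P Q hP0 hQ0 hQ1 hac μ hμ M L hL N hN u ω hω
end
end
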